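/- arXiv:0708.2899 — 2 statements merged into one kernel-verified Lean document; each statement's English description precedes it below -/
import Mathlib

section
/- Let g : Δ → ℂ be holomorphic and suppose g is the infinitesimal generator of a one-parameter continuous semigroup of holomorphic self-maps of Δ. If the angular limit ∠lim_{z→1} g(z)/|z − 1|³ = 0, then g ≡ 0 on Δ. -/
open Filter Metric

/-- `g : ℂ → ℂ` is the infinitesimal generator of a one-parameter continuous
semigroup `{F_t}_{t ≥ 0}` of holomorphic self-maps of the open unit disk
`Δ = ball 0 1`:  `F_{t+s} = F_t ∘ F_s`, `F_t z → z` as `t → 0⁺`, and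
`g z = lim_{t→0⁺} (z - F_t z)/t` for every `z ∈ Δ`. -/
def IsGenOnDisk (g : ℂ → ℂ) : Prop :=
  ∃ F : ℝ → ℂ → ℂ,
    (∀ t : ℝ, 0 ≤ t → DifferentiableOn ℂ (F t) (ball (0 : ℂ) 1) ∧
      Set.MapsTo (F t) (ball (0 : ℂ) 1) (ball (0 : ℂ) 1)) ∧
    (∀ t s : ℝ, 0 ≤ t → 0 ≤ s → ∀ z ∈ ball (0 : ℂ) 1, F (t + s) z = F t (F s z)) ∧
    (∀ z ∈ ball (0 : ℂ) 1,
      Tendsto (fun t : ℝ => F t z) (nhdsWithin 0 (Set.Ioi 0)) (nhds z)) ∧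
    (∀ z ∈ ball (0 : ℂ) 1,
      Tendsto (fun t : ℝ => (z - F t z) / (t : ℂ)) (nhdsWithin 0 (Set.Ioi 0)) (nhds (g z)))

/-- The nontangential approach region `Γ_k(τ) = {z ∈ Δ : |z - τ| / (1 - |z|) < k}`. -/
def nontangentialRegion (k : ℝ) (τ : ℂ) : Set ℂ :=
  {z : ℂ | ‖z‖ < 1 ∧ ‖z - τ‖ < k * (1 - ‖z‖)}

/-- `g` has angular limit `L` at the boundary point `τ`. -/
def AngularLimit (g : ℂ → ℂ) (τ L : ℂ) : Prop :=
  ∀ k : ℝ, 1 < k →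
    Tendsto g (nhdsWithin τ (nontangentialRegion k τ)) (nhds L)

/-!
Differentiating the Schwarz–Pick inequality for `F_t` at `t = 0⁺` gives an inequality between
the values of the generator at any two points `z, w` of the disk. Along the radius `w = r → 1⁻`,
where `g r = o(1 - r)`, both sides vanish to first order in `1 - r`, and comparing the first-order
terms shows that `q = -g / (1 - z)²` has nonnegative real part. On the other hand
`q r = o(1 - r)`. If `Re q > 0` everywhere, the Cayley transform `(q - 1) / (q + 1)` is a
holomorphic self-map of the disk, and Schwarz–Pick at `0` and `r` gives the Harnack bound
`‖q r‖ ≥ c (1 - r)` with `c > 0`, a contradiction. So `Re q` vanishes somewhere, the Cayley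
transform attains its maximal modulus `1` inside the disk and is constant, and then `q ≡ 0`.
-/

open Complex ComplexConjugate Set Topology

noncomputable def mobius (a z : ℂ) : ℂ := (a - z) / (1 - conj a * z)

theorem normSq_one_sub_conj_mul_sub_normSq_sub (a z : ℂ) :
    normSq (1 - conj a * z) - normSq (a - z) = (1 - normSq a) * (1 - normSq z) := by
  simp only [normSq_apply, sub_re, sub_im, mul_re, mul_im, conj_re, conj_im, one_re, one_im]
  ring

theorem one_sub_conj_mul_ne_zero {a z : ℂ} (ha : ‖a‖ < 1) (hz : ‖z‖ < 1) :
    1 - conj a * z ≠ 0 := by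
  have : ‖conj a * z‖ < 1 := by
    rw [norm_mul, norm_conj]
    exact mul_lt_one_of_nonneg_of_lt_one_left (norm_nonneg a) ha hz.le
  rw [sub_ne_zero]
  intro h
  simp [← h] at this

theorem norm_mobius_lt_one {a z : ℂ} (ha : ‖a‖ < 1) (hz : ‖z‖ < 1) : ‖mobius a z‖ < 1 := by
  have hpos : 0 < (1 - normSq a) * (1 - normSq z) := by
    rw [normSq_eq_norm_sq, normSq_eq_norm_sq]
    exact mul_pos (by nlinarith [norm_nonneg a]) (by nlinarith [norm_nonneg z])
  have hlt : normSq (a - z) < normSq (1 - conj a * z) := by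
    linarith [normSq_one_sub_conj_mul_sub_normSq_sub a z]
  rw [normSq_eq_norm_sq, normSq_eq_norm_sq] at hlt
  rw [mobius, norm_div, div_lt_one (norm_pos_iff.2 (one_sub_conj_mul_ne_zero ha hz))]
  exact lt_of_pow_lt_pow_left₀ 2 (norm_nonneg _) hlt

theorem mobius_self (a : ℂ) : mobius a a = 0 := by simp [mobius]

theorem mobius_zero_right (a : ℂ) : mobius a 0 = a := by simp [mobius]

theorem mobius_mobius {a z : ℂ} (ha : ‖a‖ < 1) (hz : ‖z‖ < 1) : mobius a (mobius a z) = z := by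
  have hden : 1 - z * conj a ≠ 0 := by rw [mul_comm]; exact one_sub_conj_mul_ne_zero ha hz
  rw [mobius, div_eq_iff (one_sub_conj_mul_ne_zero ha (norm_mobius_lt_one ha hz)), mobius]
  field_simp
  ring

theorem mapsTo_mobius {a : ℂ} (ha : ‖a‖ < 1) : MapsTo (mobius a) (ball 0 1) (ball 0 1) :=
  fun _ hz => mem_ball_zero_iff.2 (norm_mobius_lt_one ha (mem_ball_zero_iff.1 hz))

theorem differentiableOn_mobius {a : ℂ} (ha : ‖a‖ < 1) :
    DifferentiableOn ℂ (mobius a) (ball 0 1) :=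
  (differentiableOn_const a).sub differentiableOn_id |>.div
    ((differentiableOn_const 1).sub ((differentiableOn_const _).mul differentiableOn_id))
    fun _ hz => one_sub_conj_mul_ne_zero ha (mem_ball_zero_iff.1 hz)

/-- The Schwarz–Pick lemma. -/
theorem normSq_sub_mul_le_of_mapsTo_ball {F : ℂ → ℂ} (hd : DifferentiableOn ℂ F (ball 0 1))
    (hm : MapsTo F (ball 0 1) (ball 0 1)) {z w : ℂ} (hz : z ∈ ball (0 : ℂ) 1)
    (hw : w ∈ ball (0 : ℂ) 1) :
    normSq (F z - F w) * normSq (1 - conj w * z) ≤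
      normSq (z - w) * normSq (1 - conj (F w) * F z) := by
  have hFw := mem_ball_zero_iff.1 (hm hw)
  have hFz := mem_ball_zero_iff.1 (hm hz)
  rw [mem_ball_zero_iff] at hz hw
  have hschwarz : ‖mobius (F w) (F z)‖ ≤ ‖mobius w z‖ := by
    have key := Complex.norm_le_norm_of_mapsTo_ball (f := mobius (F w) ∘ F ∘ mobius w)
      ((differentiableOn_mobius hFw).comp (hd.comp (differentiableOn_mobius hw)
        (mapsTo_mobius hw)) (hm.comp (mapsTo_mobius hw)))
      (((mapsTo_mobius hFw).comp (hm.comp (mapsTo_mobius hw))).mono_right ball_subset_closedBall)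
      (by simp [mobius_zero_right, mobius_self]) (norm_mobius_lt_one hw hz)
    simpa [mobius_mobius hw hz] using key
  have hsq := pow_le_pow_left₀ (norm_nonneg _) hschwarz 2
  rw [← normSq_eq_norm_sq, ← normSq_eq_norm_sq, mobius, mobius, map_div₀, map_div₀,
    div_le_div_iff₀ (normSq_pos.2 (one_sub_conj_mul_ne_zero hFw hFz))
      (normSq_pos.2 (one_sub_conj_mul_ne_zero hw hz)),
    ← normSq_neg (F w - F z), ← normSq_neg (w - z), neg_sub, neg_sub] at hsq
  exact hsq

/-- A Harnack-type inequality for holomorphic self-maps of the disk. -/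
theorem one_sub_norm_mul_le_of_mapsTo_ball {ψ : ℂ → ℂ} (hd : DifferentiableOn ℂ ψ (ball 0 1))
    (hm : MapsTo ψ (ball 0 1) (ball 0 1)) {z : ℂ} (hz : z ∈ ball (0 : ℂ) 1) :
    (1 - ‖ψ 0‖) * (1 - ‖z‖) ≤ (1 + ‖ψ 0‖) * (1 - normSq (ψ z)) := by
  have h0 : (0 : ℂ) ∈ ball (0 : ℂ) 1 := mem_ball_self one_pos
  have hb := mem_ball_zero_iff.1 (hm h0)
  have hψz := mem_ball_zero_iff.1 (hm hz)
  have hsp := normSq_sub_mul_le_of_mapsTo_ball hd hm hz h0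
  have hpick := normSq_one_sub_conj_mul_sub_normSq_sub (ψ 0) (ψ z)
  simp only [map_zero, zero_mul, sub_zero, map_one, mul_one] at hsp
  rw [← normSq_neg, neg_sub] at hsp
  simp only [normSq_eq_norm_sq] at hsp hpick ⊢
  set b := ψ 0
  set N := ‖1 - conj b * ψ z‖
  have hN : 1 - ‖b‖ ≤ N :=
    calc 1 - ‖b‖ ≤ 1 - ‖conj b * ψ z‖ := by
          rw [norm_mul, norm_conj]
          nlinarith [norm_nonneg b, norm_nonneg (ψ z)]
      _ ≤ N := by simpa using norm_sub_norm_le (1 : ℂ) (conj b * ψ z)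
  have hb1 : 0 < 1 - ‖b‖ := by linarith
  have hz1 := mem_ball_zero_iff.1 hz
  have hz2 : ‖z‖ ^ 2 ≤ ‖z‖ := by nlinarith [norm_nonneg z]
  refine le_of_mul_le_mul_left ?_ hb1
  calc (1 - ‖b‖) * ((1 - ‖b‖) * (1 - ‖z‖)) = (1 - ‖b‖) ^ 2 * (1 - ‖z‖) := by ring
    _ ≤ N ^ 2 * (1 - ‖z‖ ^ 2) := by gcongr
    _ ≤ (1 - ‖b‖) * ((1 + ‖b‖) * (1 - ‖ψ z‖ ^ 2)) := by linarith

theorem add_one_ne_zero_of_re_nonneg {p : ℂ} (hp : 0 ≤ p.re) : p + 1 ≠ 0 := by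
  intro h
  have := congrArg re h
  simp only [add_re, one_re, zero_re] at this
  linarith

theorem one_sub_normSq_cayley {p : ℂ} (hp : p + 1 ≠ 0) :
    1 - normSq ((p - 1) / (p + 1)) = 4 * p.re / normSq (p + 1) := by
  have hN : normSq (p + 1) ≠ 0 := (normSq_pos.2 hp).ne'
  rw [map_div₀, eq_div_iff hN, sub_mul, div_mul_cancel₀ _ hN]
  simp only [normSq_apply, add_re, add_im, sub_re, sub_im, one_re, one_im]
  ring

theorem cayley_injective {p p' : ℂ} (hp : p + 1 ≠ 0) (hp' : p' + 1 ≠ 0)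
    (h : (p - 1) / (p + 1) = (p' - 1) / (p' + 1)) : p = p' := by
  rw [div_eq_div_iff hp hp'] at h
  linear_combination h / 2

theorem tendsto_div_one_sub_pow_of_le {f : ℝ → ℂ} {m n : ℕ} (hmn : m ≤ n)
    (h : Tendsto (fun r : ℝ => f r / (1 - r) ^ n) (𝓝[<] 1) (𝓝 0)) :
    Tendsto (fun r : ℝ => f r / (1 - r) ^ m) (𝓝[<] 1) (𝓝 0) := by
  have hpow : Tendsto (fun r : ℝ => (1 - r : ℂ) ^ (n - m)) (𝓝[<] 1) (𝓝 (0 ^ (n - m))) :=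
    ((by fun_prop : Continuous fun r : ℝ => (1 - r : ℂ) ^ (n - m)).tendsto' 1 _
      (by simp)).mono_left nhdsWithin_le_nhds
  refine (by simpa using h.mul hpow :
    Tendsto (fun r : ℝ => f r / (1 - r) ^ n * (1 - r) ^ (n - m)) _ _).congr' ?_
  filter_upwards [self_mem_nhdsWithin] with r (hr : r < 1)
  have hr' : (1 - r : ℂ) ≠ 0 := by exact_mod_cast (sub_pos.2 hr).ne'
  rw [div_mul_eq_mul_div, div_eq_div_iff (pow_ne_zero _ hr') (pow_ne_zero _ hr'), mul_assoc,
    ← pow_add, Nat.sub_add_cancel hmn]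

theorem eventually_ofReal_mem_ball : ∀ᶠ r : ℝ in 𝓝[<] 1, (r : ℂ) ∈ ball (0 : ℂ) 1 := by
  filter_upwards [Ioo_mem_nhdsLT one_pos] with r ⟨hr0, hr1⟩
  simp [abs_of_pos hr0, hr1]

theorem exists_re_nonpos_of_tendsto_div_one_sub {q : ℂ → ℂ}
    (hd : DifferentiableOn ℂ q (ball 0 1))
    (hlim : Tendsto (fun r : ℝ => q r / (1 - r)) (𝓝[<] 1) (𝓝 0)) :
    ∃ z ∈ ball (0 : ℂ) 1, (q z).re ≤ 0 := by
  by_contra! hpos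
  have hne : ∀ z ∈ ball (0 : ℂ) 1, q z + 1 ≠ 0 := fun z hz =>
    add_one_ne_zero_of_re_nonneg (hpos z hz).le
  set ψ : ℂ → ℂ := fun z => (q z - 1) / (q z + 1)
  have hψd : DifferentiableOn ℂ ψ (ball 0 1) := (hd.sub_const 1).div (hd.add_const 1) hne
  have hm : MapsTo ψ (ball 0 1) (ball 0 1) := fun z hz => by
    have := div_pos (mul_pos four_pos (hpos z hz)) (normSq_pos.2 (hne z hz))
    rw [← one_sub_normSq_cayley (hne z hz), normSq_eq_norm_sq] at this
    rw [mem_ball_zero_iff]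
    nlinarith [norm_nonneg (ψ z)]
  have hb := mem_ball_zero_iff.1 (hm (mem_ball_self one_pos))
  -- the Harnack bound for `ψ` forces `‖q r‖ ≥ c (1 - r)` with `c > 0`
  have hbound : ∀ᶠ r : ℝ in 𝓝[<] 1, 1 - ‖ψ 0‖ ≤ 4 * (1 + ‖ψ 0‖) * ‖q r / (1 - r)‖ := by
    filter_upwards [Ioo_mem_nhdsLT one_pos, eventually_ofReal_mem_ball] with r ⟨hr0, hr1⟩ hr
    have harnack := one_sub_norm_mul_le_of_mapsTo_ball hψd hm hr
    rw [one_sub_normSq_cayley (hne r hr), norm_real, Real.norm_of_nonneg hr0.le] at harnack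
    have h1 : 1 ≤ normSq (q r + 1) := by
      rw [normSq_apply, add_re, one_re, add_im, one_im, add_zero]
      nlinarith [mul_self_nonneg (q r).im, hpos r hr]
    have h2 : 4 * (q r).re / normSq (q r + 1) ≤ 4 * ‖q r‖ :=
      (div_le_self (mul_nonneg zero_le_four (hpos r hr).le) h1).trans
        (mul_le_mul_of_nonneg_left (re_le_norm _) zero_le_four)
    have h3 : ‖(1 - r : ℂ)‖ = 1 - r := by
      rw [← ofReal_one, ← ofReal_sub, norm_real, Real.norm_of_nonneg (by linarith)]
    rw [norm_div (q r), h3, ← mul_div_assoc, le_div_iff₀ (by linarith)]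
    nlinarith [norm_nonneg (ψ 0)]
  have := ge_of_tendsto (by simpa using hlim.norm.const_mul (4 * (1 + ‖ψ 0‖))) hbound
  linarith

/-- A minimum principle for the real part: through the Cayley transform it is the maximum
modulus principle. -/
theorem eqOn_const_of_re_nonneg_of_re_eq_zero {q : ℂ → ℂ} (hd : DifferentiableOn ℂ q (ball 0 1))
    (hre : ∀ z ∈ ball (0 : ℂ) 1, 0 ≤ (q z).re) {z₀ : ℂ} (hz₀ : z₀ ∈ ball (0 : ℂ) 1)
    (hre₀ : (q z₀).re = 0) : EqOn q (fun _ => q z₀) (ball 0 1) := by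
  have hne : ∀ z ∈ ball (0 : ℂ) 1, q z + 1 ≠ 0 := fun z hz =>
    add_one_ne_zero_of_re_nonneg (hre z hz)
  set ψ : ℂ → ℂ := fun z => (q z - 1) / (q z + 1)
  have hψd : DifferentiableOn ℂ ψ (ball 0 1) := (hd.sub_const 1).div (hd.add_const 1) hne
  have hmax : IsMaxOn (norm ∘ ψ) (ball 0 1) z₀ := fun z hz => by
    have h := one_sub_normSq_cayley (hne z hz)
    have h₀ := one_sub_normSq_cayley (hne z₀ hz₀)
    rw [hre₀, mul_zero, zero_div] at h₀
    have := div_nonneg (mul_nonneg zero_le_four (hre z hz)) (normSq_nonneg (q z + 1))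
    rw [normSq_eq_norm_sq] at h h₀
    show ‖ψ z‖ ≤ ‖ψ z₀‖
    nlinarith [norm_nonneg (ψ z), norm_nonneg (ψ z₀)]
  exact fun z hz => cayley_injective (hne z hz) (hne z₀ hz₀)
    (Complex.eqOn_of_isPreconnected_of_isMaxOn_norm (convex_ball 0 1).isPreconnected
      isOpen_ball hψd hz₀ hmax hz)

theorem eqOn_zero_of_re_nonneg_of_tendsto {q : ℂ → ℂ} (hd : DifferentiableOn ℂ q (ball 0 1))
    (hre : ∀ z ∈ ball (0 : ℂ) 1, 0 ≤ (q z).re)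
    (hlim : Tendsto (fun r : ℝ => q r / (1 - r)) (𝓝[<] 1) (𝓝 0)) :
    EqOn q 0 (ball 0 1) := by
  obtain ⟨z₀, hz₀, hre₀⟩ := exists_re_nonpos_of_tendsto_div_one_sub hd hlim
  have hconst := eqOn_const_of_re_nonneg_of_re_eq_zero hd hre hz₀
    (le_antisymm hre₀ (hre z₀ hz₀))
  have hq : Tendsto (fun r : ℝ => q r) (𝓝[<] 1) (𝓝 0) := by
    simpa using tendsto_div_one_sub_pow_of_le (f := fun r => q r) (m := 0) (n := 1) zero_le_one
      (by simpa using hlim)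
  have hq₀ : q z₀ = 0 := tendsto_nhds_unique (tendsto_const_nhds.congr' <| by
    filter_upwards [eventually_ofReal_mem_ball] with r hr using (hconst hr).symm) hq
  intro z hz
  rw [hconst hz, hq₀, Pi.zero_apply]

theorem normSq_add_ofReal_mul (u v : ℂ) (t : ℝ) :
    normSq (u + t * v) = normSq u + t * (2 * (u * conj v).re + t * normSq v) := by
  simp only [normSq_apply, add_re, add_im, mul_re, mul_im, ofReal_re, ofReal_im, conj_re,
    conj_im]
  ring

/-- Differentiation at `t = 0⁺` of an inequality that holds with equality at `t = 0`. -/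
theorem re_mul_conj_mul_normSq_le_of_eventually_le {X d u₀ v₀ : ℂ} {u v : ℝ → ℂ}
    (hu : Tendsto u (𝓝[>] 0) (𝓝 u₀)) (hv : Tendsto v (𝓝[>] 0) (𝓝 v₀))
    (h : ∀ᶠ t : ℝ in 𝓝[>] 0,
      normSq (X + t * u t) * normSq d ≤ normSq X * normSq (d + t * v t)) :
    (X * conj u₀).re * normSq d ≤ normSq X * (d * conj v₀).re := by
  have ht : Tendsto (fun t : ℝ => t) (𝓝[>] 0) (𝓝 0) :=
    tendsto_id.mono_left nhdsWithin_le_nhds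
  have hL : Tendsto (fun t : ℝ => (2 * (X * conj (u t)).re + t * normSq (u t)) * normSq d)
      (𝓝[>] 0) (𝓝 (2 * (X * conj u₀).re * normSq d)) := by
    simpa [Function.comp_def] using ((by fun_prop : Continuous fun p : ℝ × ℂ =>
      (2 * (X * conj p.2).re + p.1 * normSq p.2) * normSq d).tendsto (0, u₀)).comp
      (ht.prodMk_nhds hu)
  have hR : Tendsto (fun t : ℝ => normSq X * (2 * (d * conj (v t)).re + t * normSq (v t)))
      (𝓝[>] 0) (𝓝 (normSq X * (2 * (d * conj v₀).re))) := by
    simpa [Function.comp_def] using ((by fun_prop : Continuous fun p : ℝ × ℂ =>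
      normSq X * (2 * (d * conj p.2).re + p.1 * normSq p.2)).tendsto (0, v₀)).comp
      (ht.prodMk_nhds hv)
  have hle := le_of_tendsto_of_tendsto hL hR <| by
    filter_upwards [h, self_mem_nhdsWithin] with t h (ht : 0 < t)
    rw [normSq_add_ofReal_mul, normSq_add_ofReal_mul] at h
    refine le_of_mul_le_mul_left ?_ ht
    linear_combination h
  linarith

/-- The Schwarz–Pick inequality for `F_t`, differentiated at `t = 0⁺`. -/
theorem IsGenOnDisk.re_mul_conj_sub_mul_normSq_le {g : ℂ → ℂ} (hgen : IsGenOnDisk g) {z w : ℂ}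
    (hz : z ∈ ball (0 : ℂ) 1) (hw : w ∈ ball (0 : ℂ) 1) :
    ((z - w) * conj (g w - g z)).re * normSq (1 - conj w * z) ≤
      normSq (z - w) * ((1 - conj w * z) * conj (conj w * g z + conj (g w) * z)).re := by
  obtain ⟨F, hF, -, -, hder⟩ := hgen
  set a : ℝ → ℂ := fun t => (z - F t z) / t
  set b : ℝ → ℂ := fun t => (w - F t w) / t
  have ha : Tendsto a (𝓝[>] 0) (𝓝 (g z)) := hder z hz
  have hb : Tendsto b (𝓝[>] 0) (𝓝 (g w)) := hder w hw
  have ht : Tendsto (fun t : ℝ => t) (𝓝[>] 0) (𝓝 0) :=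
    tendsto_id.mono_left nhdsWithin_le_nhds
  have hv : Tendsto (fun t : ℝ => conj w * a t + conj (b t) * z - t * (conj (b t) * a t))
      (𝓝[>] 0) (𝓝 (conj w * g z + conj (g w) * z)) := by
    simpa [Function.comp_def] using ((by fun_prop : Continuous fun p : ℝ × ℂ × ℂ =>
      conj w * p.2.1 + conj p.2.2 * z - p.1 * (conj p.2.2 * p.2.1)).tendsto (0, g z, g w)).comp
      (ht.prodMk_nhds (ha.prodMk_nhds hb))
  refine re_mul_conj_mul_normSq_le_of_eventually_le (hb.sub ha) hv ?_
  filter_upwards [self_mem_nhdsWithin] with t (ht : 0 < t)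
  have htC : (t : ℂ) ≠ 0 := by exact_mod_cast ht.ne'
  have hFz : F t z = z - t * a t := by simp only [a]; field_simp; ring
  have hFw : F t w = w - t * b t := by simp only [b]; field_simp; ring
  have hsp := normSq_sub_mul_le_of_mapsTo_ball (hF t ht.le).1 (hF t ht.le).2 hz hw
  rw [hFz, hFw] at hsp
  convert hsp using 3
  · ring
  · simp only [map_sub, map_mul, conj_ofReal]
    ring

theorem re_div_eq_re_conj_mul_div_normSq (a b : ℂ) :
    (a / b).re = (conj a * b).re / normSq b := by
  rw [div_re, ← add_div]
  congr 1
  simp only [mul_re, conj_re, conj_im]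
  ring

theorem IsGenOnDisk.re_neg_div_one_sub_sq_nonneg {g : ℂ → ℂ} (hgen : IsGenOnDisk g)
    (hrad : Tendsto (fun r : ℝ => g r / (1 - r)) (𝓝[<] 1) (𝓝 0)) {z : ℂ}
    (hz : z ∈ ball (0 : ℂ) 1) : 0 ≤ (-g z / (1 - z) ^ 2).re := by
  set Φ : ℝ × ℂ → ℝ := fun p =>
    (1 + p.1) * (conj (g z) * (z - p.1) * (1 - p.1 * z)).re
      + normSq (z - p.1) * ((1 - p.1 * z) * (p.2 * conj z)).re
      - ((z - p.1) * conj p.2).re * normSq (1 - p.1 * z) with hΦ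
  have hΦ_nonneg : ∀ᶠ r : ℝ in 𝓝[<] 1, 0 ≤ Φ (r, g r / (1 - r)) := by
    filter_upwards [self_mem_nhdsWithin, eventually_ofReal_mem_ball] with r (hr1 : r < 1) hr
    have hr1C : (1 - r : ℂ) ≠ 0 := by exact_mod_cast (sub_pos.2 hr1).ne'
    set G := g r / (1 - r)
    have key := hgen.re_mul_conj_sub_mul_normSq_le hz hr
    rw [show g r = (1 - r) * G from (mul_div_cancel₀ _ hr1C).symm] at key
    -- the inequality at `w = r` vanishes to first order in `1 - r`
    have hfactor : normSq (z - r) * ((1 - conj (r : ℂ) * z) *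
          conj (conj (r : ℂ) * g z + conj ((1 - r) * G) * z)).re
        - ((z - r) * conj ((1 - r) * G - g z)).re * normSq (1 - conj (r : ℂ) * z)
        = (1 - r) * Φ (r, G) := by
      simp only [hΦ, normSq_apply, mul_re, mul_im, sub_re, sub_im, add_re, add_im, conj_re,
        conj_im, ofReal_re, ofReal_im, one_re, one_im]
      ring
    exact (mul_nonneg_iff_of_pos_left (sub_pos.2 hr1)).1 (hfactor ▸ sub_nonneg.2 key)
  have hlim : Tendsto (fun r : ℝ => Φ (r, g r / (1 - r))) (𝓝[<] 1)
      (𝓝 (2 * (conj (g z) * (z - 1) * (1 - z)).re)) := by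
    have := ((by fun_prop : Continuous Φ).tendsto (1, 0)).comp
      ((tendsto_id.mono_left nhdsWithin_le_nhds).prodMk_nhds hrad)
    simpa [hΦ, Function.comp_def, one_add_one_eq_two] using this
  rw [re_div_eq_re_conj_mul_div_normSq,
    show conj (-g z) * (1 - z) ^ 2 = conj (g z) * (z - 1) * (1 - z) by rw [map_neg]; ring]
  exact div_nonneg (by linarith [ge_of_tendsto hlim hΦ_nonneg]) (normSq_nonneg _)

theorem AngularLimit.tendsto_nhdsLT_one {f : ℂ → ℂ} {L : ℂ} (h : AngularLimit f 1 L) :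
    Tendsto (fun r : ℝ => f r) (𝓝[<] 1) (𝓝 L) := by
  refine (h 2 one_lt_two).comp (tendsto_nhdsWithin_iff.2 ⟨?_, ?_⟩)
  · exact (continuous_ofReal.tendsto' 1 1 ofReal_one).mono_left nhdsWithin_le_nhds
  · filter_upwards [Ioo_mem_nhdsLT one_pos] with r ⟨hr0, hr1⟩
    have hr : ‖(r : ℂ)‖ = r := by simp [hr0.le]
    refine ⟨by rw [hr]; exact hr1, ?_⟩
    rw [hr, ← ofReal_one, ← ofReal_sub, norm_real, Real.norm_of_nonpos (by linarith)]
    linarith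

theorem AngularLimit.tendsto_div_one_sub_pow {g : ℂ → ℂ} {n : ℕ} {L : ℂ}
    (h : AngularLimit (fun z : ℂ => g z / ((‖z - 1‖ ^ n : ℝ) : ℂ)) 1 L) :
    Tendsto (fun r : ℝ => g r / (1 - r) ^ n) (𝓝[<] 1) (𝓝 L) := by
  refine h.tendsto_nhdsLT_one.congr' ?_
  filter_upwards [self_mem_nhdsWithin] with r (hr : r < 1)
  rw [← ofReal_one, ← ofReal_sub, norm_real, Real.norm_of_nonpos (by linarith), neg_sub]
  push_cast
  rfl

/-- a holomorphic infinitesimal generator `g` on the unit disk with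
angular limit `∠lim_{z→1} g z / |z - 1|³ = 0` vanishes identically on the disk. -/
theorem generator_rigidity_disk (g : ℂ → ℂ)
    (hg : DifferentiableOn ℂ g (ball (0 : ℂ) 1))
    (hgen : IsGenOnDisk g)
    (hlim : AngularLimit (fun z : ℂ => g z / ((‖z - 1‖ ^ 3 : ℝ) : ℂ)) 1 0) :
    ∀ z ∈ ball (0 : ℂ) 1, g z = 0 := by
  have hrad := hlim.tendsto_div_one_sub_pow
  have hne : ∀ z ∈ ball (0 : ℂ) 1, (1 - z) ^ 2 ≠ 0 := fun z hz =>
    pow_ne_zero 2 (sub_ne_zero.2 (ne_of_mem_of_not_mem hz (by simp)).symm)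
  have hq := eqOn_zero_of_re_nonneg_of_tendsto (q := fun z => -g z / (1 - z) ^ 2)
    (hg.neg.div (((differentiableOn_const 1).sub differentiableOn_id).pow 2) hne)
    (fun z hz => hgen.re_neg_div_one_sub_sq_nonneg
      (by simpa using tendsto_div_one_sub_pow_of_le (m := 1) (by norm_num) hrad) hz)
    (by simpa [div_div, ← pow_succ, neg_div] using hrad.neg)
  intro z hz
  simpa [hne z hz] using hq hz
end

section
/- Let H be a complex Hilbert space with open unit ball 𝔹, let τ ∈ H with ‖τ‖ = 1, let y ∈ 𝔹, and let U be a unitary operator on H with Uτ = M_y(τ). Set m = M_y ∘ U, so that m is an automorphism of 𝔹 with m(τ) = τ, and let L = (d/dz)⟨m(zτ), τ⟩ at z = 1. Then L > 0 and for all z ∈ Δ: |1 − ⟨m(zτ), τ⟩|² / (1 − ‖m(zτ)‖²) = L · |1 − z|² / (1 − |z|²). -/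
open Metric

variable {H : Type*} [NormedAddCommGroup H] [InnerProductSpace ℂ H]

/-- The inner product in the convention of the paper: `⟨x, y⟩` is linear in the
first argument and conjugate-linear in the second. -/
noncomputable def ip (x y : H) : ℂ := inner ℂ y x

/-- The orthogonal projection `P_y` of `H` onto the span of `y`:
`P_y x = (⟨x, y⟩ / ‖y‖²) y` (and `P_0 = 0`, which this formula also yields). -/
noncomputable def Pproj (y x : H) : H := (ip x y / (‖y‖ ^ 2 : ℂ)) • y

/-- `Q_y = I - P_y`. -/
noncomputable def Qproj (y x : H) : H := x - Pproj y x

/-- The Möbius transformation of the unit ball: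
`M_y x = (y - P_y x - s Q_y x) / (1 - ⟨x, y⟩)`, where `s = √(1 - ‖y‖²)`;
the defining formula extends `M_y` past the closed ball. -/
noncomputable def Mob (y x : H) : H :=
  (1 - ip x y)⁻¹ • (y - Pproj y x - (Real.sqrt (1 - ‖y‖ ^ 2) : ℂ) • Qproj y x)

/-! Everything follows from Rudin's identity
`(1 - ⟨x, y⟩) (1 - ⟨y, b⟩) (1 - ⟨M_y x, M_y b⟩) = (1 - ‖y‖²) (1 - ⟨x, b⟩)`.
Put `w = M_y τ`, a unit vector, and `a = ⟨w, y⟩`. Then `m (z τ) = M_y (z w)` and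
`τ = M_y w`, so the identity with `x = z w`, `b = w` shows that `z ↦ ⟨m (z τ), τ⟩` is the
rational function `1 - (1 - ‖y‖²) (1 - z) / ((1 - ā) (1 - z a))`, whose derivative at `1` is
`L = (1 - ‖y‖²) / |1 - a|² > 0`, and the identity with `x = b = z w` gives
`1 - ‖m (z τ)‖² = (1 - ‖y‖²) (1 - |z|²) / |1 - z a|²`. The quotient identity is the ratio
of the two. -/

open ComplexConjugate Topology

lemma ip_smul_left (c : ℂ) (u v : H) : ip (c • u) v = c * ip u v :=
  inner_smul_right v u c

lemma ip_smul_right (c : ℂ) (u v : H) : ip u (c • v) = conj c * ip u v := by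
  simp [ip, mul_comm]

lemma ip_self (x : H) : ip x x = (‖x‖ : ℂ) ^ 2 :=
  inner_self_eq_norm_sq_to_K x

lemma Mob_zero_left (x : H) : Mob 0 x = -x := by
  simp [Mob, Pproj, Qproj, ip]

lemma one_sub_norm_sq_pos {E : Type*} [SeminormedAddCommGroup E] {x : E} (hx : ‖x‖ < 1) :
    0 < 1 - ‖x‖ ^ 2 :=
  sub_pos.2 (pow_lt_one₀ (norm_nonneg x) hx two_ne_zero)

lemma ofReal_sqrt_one_sub_sq_sq {r : ℝ} (hr : |r| ≤ 1) :
    ((√(1 - r ^ 2) : ℝ) : ℂ) ^ 2 = 1 - (r : ℂ) ^ 2 := by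
  rw [← Complex.ofReal_pow, Real.sq_sqrt (by nlinarith [abs_nonneg r, sq_abs r])]
  push_cast; ring

lemma ip_Mob_numerator {y : H} (hy : ‖y‖ ≤ 1) (x b : H) :
    ip (y - Pproj y x - (√(1 - ‖y‖ ^ 2) : ℂ) • Qproj y x)
        (y - Pproj y b - (√(1 - ‖y‖ ^ 2) : ℂ) • Qproj y b) =
      (1 - ip x y) * (1 - conj (ip b y)) - (1 - (‖y‖ : ℂ) ^ 2) * (1 - ip x b) := by
  rcases eq_or_ne y 0 with rfl | hy0
  · simp [Pproj, Qproj, ip]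
  have hr : (‖y‖ : ℂ) ≠ 0 := by simpa using hy0
  have hs := ofReal_sqrt_one_sub_sq_sq (r := ‖y‖) (by simpa using hy)
  set s : ℂ := ((√(1 - ‖y‖ ^ 2) : ℝ) : ℂ)
  have hsc : conj s = s := Complex.conj_ofReal _
  have hby : inner ℂ b y = conj (inner ℂ y b) := (inner_conj_symm _ _).symm
  simp only [Pproj, Qproj, ip, inner_sub_left, inner_sub_right, inner_smul_left, inner_smul_right,
    inner_self_eq_norm_sq_to_K, map_div₀, map_pow, Complex.conj_ofReal, hsc, hby]
  field_simp
  linear_combination (‖y‖ : ℂ) ^ 2 *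
    ((‖y‖ : ℂ) ^ 2 * inner ℂ b x - inner ℂ y x * conj (inner ℂ y b)) * hs

lemma Mob_zero_right (y : H) : Mob y 0 = y := by
  simp [Mob, Pproj, Qproj, ip]

lemma one_sub_conj_ne_zero {c : ℂ} (hc : 1 - c ≠ 0) : 1 - conj c ≠ 0 := by
  rwa [← map_one conj, ← map_sub, map_ne_zero]

lemma one_sub_ip_Mob_Mob {y : H} (hy : ‖y‖ ≤ 1) {x b : H} (hx : 1 - ip x y ≠ 0)
    (hb : 1 - ip b y ≠ 0) :
    (1 - ip x y) * (1 - conj (ip b y)) * (1 - ip (Mob y x) (Mob y b)) =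
      (1 - (‖y‖ : ℂ) ^ 2) * (1 - ip x b) := by
  have hb' := one_sub_conj_ne_zero hb
  rw [Mob, Mob, ip_smul_left, ip_smul_right, ip_Mob_numerator hy, map_inv₀, map_sub, map_one]
  field_simp
  ring

lemma one_sub_ip_Mob_self {y : H} (hy : ‖y‖ ≤ 1) {x : H} (hx : 1 - ip x y ≠ 0) :
    (1 - ip x y) * (1 - ip (Mob y x) y) = 1 - (‖y‖ : ℂ) ^ 2 := by
  simpa [Mob_zero_right, ip] using one_sub_ip_Mob_Mob hy hx (b := 0) (by simp [ip])

lemma Mob_Mob {y : H} (hy : ‖y‖ < 1) {x : H} (hx : 1 - ip x y ≠ 0) : Mob y (Mob y x) = x := by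
  rcases eq_or_ne y 0 with rfl | hy0
  · simp [Mob_zero_left]
  have hr : (‖y‖ : ℂ) ≠ 0 := by simpa using hy0
  have hs := ofReal_sqrt_one_sub_sq_sq (r := ‖y‖) (by simpa using hy.le)
  have hr1 : 1 - (‖y‖ : ℂ) ^ 2 ≠ 0 := by
    exact_mod_cast (one_sub_norm_sq_pos hy).ne'
  have h1 := one_sub_ip_Mob_self hy.le hx
  have hx' : 1 - inner ℂ y x ≠ 0 := hx
  have h1' : 1 - ip (Mob y x) y = (1 - (‖y‖ : ℂ) ^ 2) / (1 - ip x y) := by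
    rw [eq_div_iff hx, mul_comm, h1]
  have h2 : ip (Mob y x) y = ((‖y‖ : ℂ) ^ 2 - ip x y) / (1 - ip x y) := by
    rw [eq_div_iff hx]
    linear_combination -h1
  conv_lhs => rw [Mob, h1', Pproj, Qproj, h2]
  -- both sides are now explicit combinations of `x` and `y`
  simp only [Mob, Pproj, Qproj, ip, inner_sub_right, inner_smul_right, inner_self_eq_norm_sq_to_K]
  match_scalars
  · field_simp
    linear_combination -((‖y‖ : ℂ) ^ 2 * inner ℂ y x) * hs
  · field_simp
    exact hs

lemma one_sub_norm_Mob_sq {y : H} (hy : ‖y‖ ≤ 1) {x : H} (hx : 1 - ip x y ≠ 0) :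
    ‖1 - ip x y‖ ^ 2 * (1 - ‖Mob y x‖ ^ 2) = (1 - ‖y‖ ^ 2) * (1 - ‖x‖ ^ 2) := by
  have hc : (1 - ip x y) * (1 - conj (ip x y)) = (‖1 - ip x y‖ : ℂ) ^ 2 := by
    rw [← Complex.mul_conj', map_sub, map_one]
  have h := one_sub_ip_Mob_Mob hy hx hx
  rw [ip_self, ip_self, hc] at h
  exact_mod_cast h

lemma one_sub_ip_ne_zero {x y : H} (hx : ‖x‖ ≤ 1) (hy : ‖y‖ < 1) : 1 - ip x y ≠ 0 := by
  have h : ‖ip x y‖ < 1 :=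
    (norm_inner_le_norm y x).trans_lt ((mul_le_of_le_one_right (norm_nonneg y) hx).trans_lt hy)
  rw [sub_ne_zero]
  rintro h1
  simp [← h1] at h

lemma norm_Mob_of_norm_eq_one {y : H} (hy : ‖y‖ < 1) {x : H} (hx : ‖x‖ = 1) :
    ‖Mob y x‖ = 1 := by
  have hxy := one_sub_ip_ne_zero hx.le hy
  have h := one_sub_norm_Mob_sq hy.le hxy
  rw [hx, one_pow, sub_self, mul_zero] at h
  have hM := (mul_eq_zero.1 h).resolve_left (pow_ne_zero 2 (norm_ne_zero_iff.2 hxy))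
  rwa [sub_eq_zero, eq_comm, pow_eq_one_iff_of_nonneg (norm_nonneg _) two_ne_zero] at hM

lemma hasDerivAt_one_sub_div_one_sub_mul {a : ℂ} (ha : 1 - a ≠ 0) :
    HasDerivAt (fun z : ℂ => (1 - z) / (1 - z * a)) (-(1 - a)⁻¹) 1 := by
  have h : HasDerivAt (fun z : ℂ => (1 - z) / (1 - z * a))
      ((-1 * (1 - 1 * a) - (1 - 1) * -(1 * a)) / (1 - 1 * a) ^ 2) 1 :=
    ((hasDerivAt_id' 1).const_sub 1).div (((hasDerivAt_id' 1).mul_const a).const_sub 1)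
      (by rwa [one_mul])
  refine h.congr_deriv ?_
  field_simp
  ring

section Slice

variable {y τ : H}

lemma one_sub_ip_Mob_smul_Mob (hy : ‖y‖ < 1) (hτ : ‖τ‖ = 1) {z : ℂ}
    (hz : 1 - z * ip (Mob y τ) y ≠ 0) :
    (1 - z * ip (Mob y τ) y) * (1 - conj (ip (Mob y τ) y)) *
        (1 - ip (Mob y (z • Mob y τ)) τ) =
      (1 - (‖y‖ : ℂ) ^ 2) * (1 - z) := by
  have hτy := one_sub_ip_ne_zero hτ.le hy
  have hw := norm_Mob_of_norm_eq_one hy hτ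
  have h := one_sub_ip_Mob_Mob hy.le (x := z • Mob y τ) (b := Mob y τ) (by rwa [ip_smul_left])
    (one_sub_ip_ne_zero hw.le hy)
  rwa [Mob_Mob hy hτy, ip_smul_left, ip_smul_left, ip_self, hw, Complex.ofReal_one, one_pow,
    mul_one] at h

lemma ip_Mob_smul_Mob (hy : ‖y‖ < 1) (hτ : ‖τ‖ = 1) {z : ℂ}
    (hz : 1 - z * ip (Mob y τ) y ≠ 0) :
    ip (Mob y (z • Mob y τ)) τ =
      1 - (1 - (‖y‖ : ℂ) ^ 2) / (1 - conj (ip (Mob y τ) y)) *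
        ((1 - z) / (1 - z * ip (Mob y τ) y)) := by
  have ha := one_sub_conj_ne_zero (one_sub_ip_ne_zero (norm_Mob_of_norm_eq_one hy hτ).le hy)
  have h := one_sub_ip_Mob_smul_Mob hy hτ hz
  field_simp
  linear_combination -h

lemma hasDerivAt_ip_Mob_smul_Mob (hy : ‖y‖ < 1) (hτ : ‖τ‖ = 1) :
    HasDerivAt (fun z : ℂ => ip (Mob y (z • Mob y τ)) τ)
      (((1 - ‖y‖ ^ 2) / ‖1 - ip (Mob y τ) y‖ ^ 2 : ℝ) : ℂ) 1 := by
  have ha := one_sub_ip_ne_zero (norm_Mob_of_norm_eq_one hy hτ).le hy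
  have hca := one_sub_conj_ne_zero ha
  set a := ip (Mob y τ) y
  have heq : (fun z : ℂ => ip (Mob y (z • Mob y τ)) τ) =ᶠ[𝓝 1]
      fun z => 1 - (1 - (‖y‖ : ℂ) ^ 2) / (1 - conj a) * ((1 - z) / (1 - z * a)) :=
    ((continuous_const.sub (continuous_id.mul continuous_const)).continuousAt.eventually_ne
      (by simpa using ha)).mono fun z hz => ip_Mob_smul_Mob hy hτ hz
  refine (((hasDerivAt_one_sub_div_one_sub_mul ha).const_mul _).const_sub 1).congr_of_eventuallyEq
    heq |>.congr_deriv ?_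
  rw [Complex.ofReal_div, Complex.ofReal_pow, ← Complex.mul_conj', map_sub, map_one]
  push_cast
  field_simp

lemma koranyi_quotient_Mob_smul_Mob (hy : ‖y‖ < 1) (hτ : ‖τ‖ = 1) {z : ℂ}
    (hz : ‖z‖ < 1) :
    ‖1 - ip (Mob y (z • Mob y τ)) τ‖ ^ 2 / (1 - ‖Mob y (z • Mob y τ)‖ ^ 2) =
      (1 - ‖y‖ ^ 2) / ‖1 - ip (Mob y τ) y‖ ^ 2 * (‖1 - z‖ ^ 2 / (1 - ‖z‖ ^ 2)) := by
  have hw := norm_Mob_of_norm_eq_one hy hτ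
  have ha := one_sub_ip_ne_zero hw.le hy
  have hza : 1 - z * ip (Mob y τ) y ≠ 0 := by
    rw [← ip_smul_left]
    exact one_sub_ip_ne_zero (by simpa [norm_smul, hw] using hz.le) hy
  have hnum := congrArg norm (one_sub_ip_Mob_smul_Mob hy hτ hza)
  rw [← map_one conj, ← map_sub, map_one] at hnum
  simp only [norm_mul, Complex.norm_conj] at hnum
  have hden := one_sub_norm_Mob_sq hy.le (x := z • Mob y τ) (by rwa [ip_smul_left])
  rw [ip_smul_left, norm_smul, hw, mul_one] at hden
  have hy2 := one_sub_norm_sq_pos hy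
  have hz2 := one_sub_norm_sq_pos hz
  have hc : ‖1 - (‖y‖ : ℂ) ^ 2‖ = 1 - ‖y‖ ^ 2 := by
    rw [← Complex.ofReal_pow, ← Complex.ofReal_one, ← Complex.ofReal_sub, Complex.norm_real,
      Real.norm_of_nonneg hy2.le]
  have hA : 0 < ‖1 - z * ip (Mob y τ) y‖ := norm_pos_iff.2 hza
  have hB : 0 < ‖1 - ip (Mob y τ) y‖ := norm_pos_iff.2 ha
  rw [hc] at hnum
  rw [eq_div_of_mul_eq (by positivity) ((mul_comm _ _).trans hnum),
    eq_div_of_mul_eq (by positivity) ((mul_comm _ _).trans hden)]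
  field_simp

end Slice

/-- with `m = M_y ∘ U` (where `U` is a unitary with `U τ = M_y τ`, so
that `m` is an automorphism of the ball fixing `τ`) and
`L = (d/dz)⟨m(zτ), τ⟩ |_{z=1}`, one has `L > 0` (in particular `L` is real) and
`|1 - ⟨m(zτ), τ⟩|² / (1 - ‖m(zτ)‖²) = L · |1 - z|² / (1 - |z|²)` for all `z ∈ Δ`. -/
theorem koranyi_quotient_identity (y τ : H) (hy : ‖y‖ < 1) (hτ : ‖τ‖ = 1)
    (U : H ≃ₗᵢ[ℂ] H) (hU : U τ = Mob y τ) :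
    0 < (deriv (fun z : ℂ => ip (Mob y (U (z • τ))) τ) 1).re ∧
    (deriv (fun z : ℂ => ip (Mob y (U (z • τ))) τ) 1).im = 0 ∧
    ∀ z : ℂ, ‖z‖ < 1 →
      ‖1 - ip (Mob y (U (z • τ))) τ‖ ^ 2 / (1 - ‖Mob y (U (z • τ))‖ ^ 2) =
        (deriv (fun z : ℂ => ip (Mob y (U (z • τ))) τ) 1).re *
          (‖1 - z‖ ^ 2 / (1 - ‖z‖ ^ 2)) := by
  have hUz (z : ℂ) : U (z • τ) = z • Mob y τ := by rw [map_smul, hU]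
  have ha := one_sub_ip_ne_zero (norm_Mob_of_norm_eq_one hy hτ).le hy
  simp only [hUz, (hasDerivAt_ip_Mob_smul_Mob hy hτ).deriv, Complex.ofReal_re, Complex.ofReal_im]
  exact ⟨div_pos (one_sub_norm_sq_pos hy) (pow_pos (norm_pos_iff.2 ha) 2), trivial,
    fun z hz => koranyi_quotient_Mob_smul_Mob hy hτ hz⟩
end
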